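/- Let u : ℝ → ℝ be positive and C², and let q ≥ 0, m > 1. Define v(x) = ∫₀^{u(x)} exp(s^{q+1}/((q+1)(m−1))) ds. Then at any point where u'(x) ≠ 0, one has (m−1)|v'|^{m−2} v'' = exp((m−1)·u^{q+1}/((q+1)(m−1)))·[(m−1)|u'|^{m−2}u'' + u^q |u'|^m], so that if (m−1)|u'|^{m−2}u'' = −u^q|u'|^m then v is m-harmonic (|v'|^{m−2}v' has zero derivative). -/

import Mathlib

/-!
Write `v = G ∘ u` with `G' = g`, `g s = exp (s ^ (q + 1) / ((q + 1) (m - 1)))`, so that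
`g' = g · s ^ q / (m - 1)`. The chain rule gives `v' = g(u) u'` and
`v'' = g(u) (u'' + u ^ q u'² / (m - 1))`; the factor `|v'| ^ (m - 2)` contributes `g(u) ^ (m - 2)`,
so everything is multiplied by `g(u) ^ (m - 1)`, which is the exponential in the statement.
Since `v' ≠ 0`, the derivative of `|v'| ^ (m - 2) v'` is `(m - 1) |v'| ^ (m - 2) v''`.
-/

open Real

theorem hasDerivAt_abs_rpow_mul_self (p : ℝ) {t : ℝ} (ht : t ≠ 0) :
    HasDerivAt (fun s => |s| ^ p * s) ((p + 1) * |t| ^ p) t := by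
  have ht' : |t| ≠ 0 := abs_ne_zero.2 ht
  refine (((hasDerivAt_abs ht).rpow_const (Or.inl ht')).mul (hasDerivAt_id' t)).congr_deriv ?_
  rw [show (SignType.sign t : ℝ) * p * |t| ^ (p - 1) * t =
      p * (|t| ^ (p - 1) * (SignType.sign t * t)) by ring,
    sign_mul_self, rpow_sub_one ht', div_mul_cancel₀ _ ht']
  ring

theorem hasDerivAt_exp_rpow_add_one_div {q : ℝ} (hq : 0 ≤ q) (k t : ℝ) :
    HasDerivAt (fun s => exp (s ^ (q + 1) / ((q + 1) * k)))
      (exp (t ^ (q + 1) / ((q + 1) * k)) * (t ^ q / k)) t := by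
  have hq1 : q + 1 ≠ 0 := by linarith
  convert ((hasDerivAt_rpow_const (p := q + 1) (Or.inr (by linarith))).div_const
    ((q + 1) * k)).exp using 2
  rw [add_sub_cancel_right, mul_div_mul_left _ _ hq1]

theorem deriv_integral_comp {g u : ℝ → ℝ} (hg : Continuous g) (hu : Differentiable ℝ u)
    (a : ℝ) :
    deriv (fun x => ∫ s in a..u x, g s) = fun y => g (u y) * deriv u y :=
  funext fun y => ((hg.integral_hasStrictDerivAt a (u y)).hasDerivAt.comp y (hu y).hasDerivAt).deriv

/-- `(m - 1) |v'| ^ (m - 2) v''` for `v' = E a`, `v'' = E (w / (m - 1)) a² + E b`. -/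
theorem mLaplacian_comp_identity {m E a b w : ℝ} (hm : m ≠ 1) (hE : 0 < E) (ha : a ≠ 0) :
    (m - 1) * |E * a| ^ (m - 2) * (E * (w / (m - 1)) * a * a + E * b) =
      E ^ (m - 1) * ((m - 1) * |a| ^ (m - 2) * b + w * |a| ^ m) := by
  have hm1 : m - 1 ≠ 0 := sub_ne_zero.2 hm
  have hEm : E ^ (m - 1) = E ^ (m - 2) * E := by
    rw [show m - 1 = (m - 2) + 1 by ring, rpow_add_one hE.ne']
  have ham : |a| ^ m = |a| ^ (m - 2) * a ^ 2 := by
    rw [← sq_abs, ← rpow_natCast, ← rpow_add (abs_pos.2 ha)]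
    norm_num
  rw [abs_mul, abs_of_pos hE, mul_rpow hE.le (abs_nonneg a), hEm, ham]
  field_simp
  ring

theorem stmt_6_general (u : ℝ → ℝ) (hu2 : ContDiff ℝ 2 u)
    (q m : ℝ) (hq : 0 ≤ q) (hm : 1 < m)
    (v : ℝ → ℝ)
    (hv : v = fun x => ∫ s in (0:ℝ)..(u x), Real.exp (s ^ (q + 1) / ((q + 1) * (m - 1))))
    (x : ℝ) (hx : deriv u x ≠ 0) :
    (m - 1) * |deriv v x| ^ (m - 2) * deriv (deriv v) x =
      Real.exp ((m - 1) * (u x) ^ (q + 1) / ((q + 1) * (m - 1))) *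
        ((m - 1) * |deriv u x| ^ (m - 2) * deriv (deriv u) x +
          (u x) ^ q * |deriv u x| ^ m) ∧
    ((m - 1) * |deriv u x| ^ (m - 2) * deriv (deriv u) x =
        -(u x) ^ q * |deriv u x| ^ m →
      deriv (fun y => |deriv v y| ^ (m - 2) * deriv v y) x = 0) := by
  have hu : Differentiable ℝ u := hu2.differentiable two_ne_zero
  have hu' : Differentiable ℝ (deriv u) := (hu2.deriv' (n := 1)).differentiable one_ne_zero
  have hweight : Continuous fun s : ℝ => exp (s ^ (q + 1) / ((q + 1) * (m - 1))) :=
    ((continuous_rpow_const (by linarith)).div_const _).rexp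
  have hv' := hv ▸ deriv_integral_comp hweight hu 0
  set E := exp (u x ^ (q + 1) / ((q + 1) * (m - 1)))
  have hv'x : deriv v x = E * deriv u x := congrFun hv' x
  have hv'' : HasDerivAt (deriv v)
      (E * (u x ^ q / (m - 1)) * deriv u x * deriv u x + E * deriv (deriv u) x) x := by
    rw [hv']
    exact ((hasDerivAt_exp_rpow_add_one_div hq _ _).comp x (hu x).hasDerivAt).mul (hu' x).hasDerivAt
  have hexp : exp ((m - 1) * u x ^ (q + 1) / ((q + 1) * (m - 1))) = E ^ (m - 1) := by
    rw [mul_div_assoc, mul_comm, exp_mul]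
  have key : (m - 1) * |deriv v x| ^ (m - 2) * deriv (deriv v) x =
      exp ((m - 1) * u x ^ (q + 1) / ((q + 1) * (m - 1))) *
        ((m - 1) * |deriv u x| ^ (m - 2) * deriv (deriv u) x + u x ^ q * |deriv u x| ^ m) := by
    rw [hv'x, hv''.deriv, hexp, mLaplacian_comp_identity hm.ne' (exp_pos _) hx]
  refine ⟨key, fun hu_eq => ?_⟩
  have hv'x0 : deriv v x ≠ 0 := hv'x ▸ mul_ne_zero (exp_pos _).ne' hx
  have hflux : HasDerivAt (fun y => |deriv v y| ^ (m - 2) * deriv v y)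
      ((m - 2 + 1) * |deriv v x| ^ (m - 2) * deriv (deriv v) x) x :=
    (hasDerivAt_abs_rpow_mul_self (m - 2) hv'x0).comp x hv''.differentiableAt.hasDerivAt
  rw [hflux.deriv, show m - 2 + 1 = m - 1 by ring, key, hu_eq]
  ring

theorem stmt_6 (u : ℝ → ℝ) (hu : ∀ x, 0 < u x) (hu2 : ContDiff ℝ 2 u)
    (q m : ℝ) (hq : 0 ≤ q) (hm : 1 < m)
    (v : ℝ → ℝ)
    (hv : v = fun x => ∫ s in (0:ℝ)..(u x), Real.exp (s ^ (q + 1) / ((q + 1) * (m - 1))))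
    (x : ℝ) (hx : deriv u x ≠ 0) :
    (m - 1) * |deriv v x| ^ (m - 2) * deriv (deriv v) x =
      Real.exp ((m - 1) * (u x) ^ (q + 1) / ((q + 1) * (m - 1))) *
        ((m - 1) * |deriv u x| ^ (m - 2) * deriv (deriv u) x +
          (u x) ^ q * |deriv u x| ^ m) ∧
    ((m - 1) * |deriv u x| ^ (m - 2) * deriv (deriv u) x =
        -(u x) ^ q * |deriv u x| ^ m →
      deriv (fun y => |deriv v y| ^ (m - 2) * deriv v y) x = 0) :=
  stmt_6_general u hu2 q m hq hm v hv x hx
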